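/- Let d be a positive integer, let Ω ⊆ ℝ^d be a locally compact set, and let φ be any gauge. Then for a typical function f ∈ C(Ω), the set {x ∈ Ω : lip_φ f(x) > 0} is microscopic in ℝ^d. -/

import Mathlib

open Filter Set Topology MeasureTheory
open scoped ENNReal NNReal

noncomputable section

/-- A gauge: nondecreasing on `[0,∞)`, right-continuous, `φ 0 = 0`, positive on `(0,∞)`. -/
def IsGauge (φ : ℝ → ℝ) : Prop :=
  (∀ ⦃a b : ℝ⦄, 0 ≤ a → a ≤ b → φ a ≤ φ b) ∧
  (∀ a : ℝ, 0 ≤ a → ContinuousWithinAt φ (Set.Ici a) a) ∧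
  φ 0 = 0 ∧ (∀ r : ℝ, 0 < r → 0 < φ r)

/-- `N_δ(E)`: the least number of sets of diameter at most `δ` needed to cover `E`. -/
def coverNum {X : Type*} [PseudoMetricSpace X] (δ : ℝ) (E : Set X) : ℝ≥0∞ :=
  ⨅ (n : ℕ) (_ : ∃ F : Fin n → Set X,
    (∀ i, EMetric.diam (F i) ≤ ENNReal.ofReal δ) ∧ E ⊆ ⋃ i, F i), (n : ℝ≥0∞)

/-- `ν_0^ζ(E) = liminf_{δ→0+} N_δ(E)·ζ(δ)`. -/
def nu0 {X : Type*} [PseudoMetricSpace X] (ζ : ℝ → ℝ) (E : Set X) : ℝ≥0∞ :=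
  Filter.liminf (fun δ : ℝ => coverNum δ E * ENNReal.ofReal (ζ δ)) (𝓝[>] (0:ℝ))

/-- The lower box-counting measure `ν^ζ`. -/
def lowerBoxMeasure {X : Type*} [PseudoMetricSpace X] (ζ : ℝ → ℝ) (E : Set X) : ℝ≥0∞ :=
  ⨅ (G : ℕ → Set X) (_ : E ⊆ ⋃ n, G n), ∑' n, nu0 ζ (G n)

/-- The lower box dimension `lbdim E = liminf_{r→0+} log N_r(E)/|log r|`. -/
def lbdim {X : Type*} [PseudoMetricSpace X] (E : Set X) : EReal :=
  Filter.liminf (fun r : ℝ => ENNReal.log (coverNum r E) * ((|Real.log r|⁻¹ : ℝ) : EReal))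
    (𝓝[>] (0:ℝ))

/-- The lower packing dimension. -/
def lpdim {X : Type*} [PseudoMetricSpace X] (E : Set X) : EReal :=
  ⨅ (G : ℕ → Set X) (_ : E ⊆ ⋃ n, G n), ⨆ n, lbdim (G n)

/-- The generalized lower scaled oscillation `lip_φ f`. -/
def lipGauge {X : Type*} [PseudoMetricSpace X] (φ : ℝ → ℝ) (f : X → ℝ) (x : X) : ℝ≥0∞ :=
  Filter.liminf
    (fun r : ℝ => EMetric.diam (f '' Metric.closedBall x r) / ENNReal.ofReal (φ r))
    (𝓝[>] (0:ℝ))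

/-- The upper scaled oscillation `Lip f`. -/
def LipGauge {X : Type*} [PseudoMetricSpace X] (φ : ℝ → ℝ) (f : X → ℝ) (x : X) : ℝ≥0∞ :=
  Filter.limsup
    (fun r : ℝ => EMetric.diam (f '' Metric.closedBall x r) / ENNReal.ofReal (φ r))
    (𝓝[>] (0:ℝ))

/-- The Hausdorff measure with gauge `ξ`. -/
def hausdorffGauge {X : Type*} [PseudoMetricSpace X] (ξ : ℝ → ℝ) (E : Set X) : ℝ≥0∞ :=
  ⨆ (δ : ℝ) (_ : 0 < δ), ⨅ (G : ℕ → Set X) (_ : E ⊆ ⋃ n, G n)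
    (_ : ∀ n, EMetric.diam (G n) ≤ ENNReal.ofReal δ),
    ∑' n, ENNReal.ofReal (ξ (EMetric.diam (G n)).toReal)

/-- A box in `ℝ^k`. -/
def IsBox {k : ℕ} (S : Set (EuclideanSpace ℝ (Fin k))) : Prop :=
  ∃ a b : Fin k → ℝ, S = {x | ∀ i, x i ∈ Set.Icc (a i) (b i)}

/-- A microscopic subset of `ℝ^k`. -/
def Microscopic {k : ℕ} (X : Set (EuclideanSpace ℝ (Fin k))) : Prop :=
  ∀ ε : ℝ, 0 < ε → ∃ B : ℕ → Set (EuclideanSpace ℝ (Fin k)),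
    (∀ n, IsBox (B n)) ∧ X ⊆ ⋃ n, B n ∧
    ∀ n, MeasureTheory.volume (B n) ≤ ENNReal.ofReal (ε ^ (n + 1))

/-- A microscopic subset of `ℝ`. -/
def MicroscopicR (E : Set ℝ) : Prop :=
  ∀ ε : ℝ, 0 < ε → ∃ I : ℕ → ℝ × ℝ,
    E ⊆ ⋃ n, Set.Icc (I n).1 (I n).2 ∧
    ∀ n, MeasureTheory.volume (Set.Icc (I n).1 (I n).2) ≤ ENNReal.ofReal (ε ^ (n + 1))

end


open Function Metric

/-!
Every point where `lip_φ f > 0` lies in some `oscSet φ f n s ∩ K`: a point of a compact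
`K ⊆ Ω` at which `f` oscillates by at least `φ r / n` on every ball of radius `r < s`. For fixed
`K, n, s, ε`, the functions for which this set is covered by boxes of volumes at most
`ε, ε², ε³, …` contain a dense open set. Indeed, compose a Tietze extension of `f` with the
map `stairMap` that collapses each cell of a fine cubical grid to a point. The result is
uniformly close to `f` and is constant on all balls of a fixed radius that avoid thin slabs
around the grid hyperplanes; any function uniformly close to it near `K` therefore oscillates
little on those balls, so its oscillation set lies in the slabs, whose volumes can be made as
small as needed. Intersecting over countably many parameters and using that microscopic sets
form a σ-ideal gives the theorem.
-/

section Microscopic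

variable {k : ℕ}

/-- `Microscopic X` unfolds to `∀ ε, 0 < ε → MicroscopicAt ε X`. -/
def MicroscopicAt (ε : ℝ) (X : Set (EuclideanSpace ℝ (Fin k))) : Prop :=
  ∃ B : ℕ → Set (EuclideanSpace ℝ (Fin k)),
    (∀ n, IsBox (B n)) ∧ X ⊆ ⋃ n, B n ∧
      ∀ n, volume (B n) ≤ ENNReal.ofReal (ε ^ (n + 1))

theorem MicroscopicAt.mono {ε : ℝ} {X Y : Set (EuclideanSpace ℝ (Fin k))}
    (h : MicroscopicAt ε Y) (hXY : X ⊆ Y) : MicroscopicAt ε X :=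
  let ⟨B, hB, hcov, hvol⟩ := h
  ⟨B, hB, hXY.trans hcov, hvol⟩

theorem MicroscopicAt.mono_level {ε ε' : ℝ} {X : Set (EuclideanSpace ℝ (Fin k))}
    (h : MicroscopicAt ε X) (hε : 0 ≤ ε) (hεε' : ε ≤ ε') : MicroscopicAt ε' X :=
  let ⟨B, hB, hcov, hvol⟩ := h
  ⟨B, hB, hcov, fun n => (hvol n).trans (ENNReal.ofReal_le_ofReal (by gcongr))⟩

theorem Microscopic.mono {X Y : Set (EuclideanSpace ℝ (Fin k))}
    (h : Microscopic Y) (hXY : X ⊆ Y) : Microscopic X :=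
  fun ε hε => MicroscopicAt.mono (h ε hε) hXY

theorem microscopic_of_forall_microscopicAt_one_div {X : Set (EuclideanSpace ℝ (Fin k))}
    (h : ∀ q : ℕ, MicroscopicAt (1 / (q + 1)) X) : Microscopic X := by
  intro ε hε
  obtain ⟨q, hq⟩ := exists_nat_one_div_lt hε
  exact (h q).mono_level (by positivity) hq.le

/-- The dyadic decomposition `j + 1 = 2 ^ a * (2 * b + 1)`: the index `j` is at most linear in
`b` for fixed `a`, which is what lets countably many level sequences be interleaved. -/
theorem exists_surjective_succ_le_two_pow_mul :
    ∃ e : ℕ → ℕ × ℕ, Surjective e ∧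
      ∀ j, j + 1 ≤ 2 ^ ((e j).1 + 1) * ((e j).2 + 1) := by
  refine ⟨fun j => ((j + 1).factorization 2, ordCompl[2] (j + 1) / 2), ?_, fun j => ?_⟩
  · rintro ⟨a, b⟩
    refine ⟨2 ^ a * (2 * b + 1) - 1, ?_⟩
    have hodd : ¬ 2 ∣ 2 * b + 1 := by omega
    have hfac : (2 ^ a * (2 * b + 1)).factorization 2 = a := by
      rw [Nat.factorization_mul (by positivity) (by omega), Nat.Prime.factorization_pow
        Nat.prime_two, Finsupp.add_apply, Nat.factorization_eq_zero_of_not_dvd hodd]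
      simp
    have hpos : 0 < 2 ^ a * (2 * b + 1) := by positivity
    simp only [Nat.sub_add_cancel hpos, hfac, Prod.mk.injEq, true_and]
    rw [Nat.mul_div_cancel_left _ (by positivity)]
    omega
  · have hsplit := Nat.ordProj_mul_ordCompl_eq_self (j + 1) 2
    have hodd : ¬ 2 ∣ ordCompl[2] (j + 1) := Nat.not_dvd_ordCompl Nat.prime_two (by omega)
    calc j + 1 = 2 ^ (j + 1).factorization 2 * ordCompl[2] (j + 1) := hsplit.symm
      _ ≤ 2 ^ (j + 1).factorization 2 * (2 * (ordCompl[2] (j + 1) / 2 + 1)) := by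
        gcongr; omega
      _ = _ := by ring

theorem Microscopic.iUnion {X : ℕ → Set (EuclideanSpace ℝ (Fin k))}
    (h : ∀ i, Microscopic (X i)) : Microscopic (⋃ i, X i) := by
  intro ε hε
  set ε' := min ε 1
  have hε' : 0 < ε' := lt_min hε one_pos
  choose B hB hcov hvol using fun i => h i (ε' ^ 2 ^ (i + 1)) (by positivity)
  obtain ⟨e, he, hebound⟩ := exists_surjective_succ_le_two_pow_mul
  refine ⟨fun j => B (e j).1 (e j).2, fun j => hB _ _, ?_, fun j => ?_⟩
  · simp only [iUnion_subset_iff]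
    intro i x hx
    obtain ⟨m, hm⟩ := mem_iUnion.1 (hcov i hx)
    obtain ⟨j, hj⟩ := he (i, m)
    exact mem_iUnion.2 ⟨j, by rwa [hj]⟩
  · refine (hvol _ _).trans (ENNReal.ofReal_le_ofReal ?_)
    calc (ε' ^ 2 ^ ((e j).1 + 1)) ^ ((e j).2 + 1)
        = ε' ^ (2 ^ ((e j).1 + 1) * ((e j).2 + 1)) := (pow_mul _ _ _).symm
      _ ≤ ε' ^ (j + 1) := pow_le_pow_of_le_one hε'.le (min_le_right _ _) (hebound j)
      _ ≤ ε ^ (j + 1) := by gcongr; exact min_le_left _ _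

def box (a b : Fin k → ℝ) : Set (EuclideanSpace ℝ (Fin k)) :=
  {x | ∀ i, x i ∈ Icc (a i) (b i)}

theorem isBox_box (a b : Fin k → ℝ) : IsBox (box a b) := ⟨a, b, rfl⟩

theorem volume_box (a b : Fin k → ℝ) :
    volume (box a b) = ∏ i, ENNReal.ofReal (b i - a i) := by
  have h : box a b =
      (MeasurableEquiv.toLp 2 (Fin k → ℝ)).symm ⁻¹' univ.pi fun i => Icc (a i) (b i) := by
    ext x
    simp only [box, mem_ofPred_eq, mem_preimage, mem_univ_pi]
    rfl
  rw [h, (EuclideanSpace.volume_preserving_symm_measurableEquiv_toLp (Fin k)).measure_preimage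
      (MeasurableSet.univ_pi fun i => measurableSet_Icc).nullMeasurableSet, volume_pi_pi]
  simp [Real.volume_Icc]

theorem microscopicAt_iUnion_of_finite (hk : 0 < k) {ε : ℝ} (hε0 : 0 ≤ ε) (hε1 : ε ≤ 1)
    {ι : Type*} [Finite ι] {B : ι → Set (EuclideanSpace ℝ (Fin k))} (hB : ∀ i, IsBox (B i))
    (hvol : ∀ i, volume (B i) ≤ ENNReal.ofReal (ε ^ Nat.card ι)) :
    MicroscopicAt ε (⋃ i, B i) := by
  classical
  set e := Finite.equivFin ι
  have hnull : volume (box (k := k) 0 0) = 0 := by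
    simp [volume_box, Finset.prod_const, zero_pow hk.ne']
  refine ⟨fun n => if h : n < Nat.card ι then B (e.symm ⟨n, h⟩) else box 0 0,
    fun n => ?_, fun x hx => ?_, fun n => ?_⟩
  · dsimp only
    split_ifs
    exacts [hB _, isBox_box _ _]
  · obtain ⟨i, hi⟩ := mem_iUnion.1 hx
    exact mem_iUnion.2 ⟨e i, by simpa [dif_pos (e i).2] using hi⟩
  · dsimp only
    split_ifs with h
    · exact (hvol _).trans (ENNReal.ofReal_le_ofReal (pow_le_pow_of_le_one hε0 hε1 h))
    · simp [hnull]

end Microscopic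

theorem ContinuousMap.hasBasis_nhds_dist {X Y : Type*} [TopologicalSpace X]
    [PseudoMetricSpace Y] (f : C(X, Y)) :
    (𝓝 f).HasBasis (fun p : Set X × ℝ => IsCompact p.1 ∧ 0 < p.2)
      fun p => {g | ∀ x ∈ p.1, dist (f x) (g x) < p.2} := by
  simpa [UniformSpace.ball] using
    nhds_basis_uniformity' Metric.uniformity_basis_dist.compactConvergenceUniformity

section Oscillation

variable {X : Type*} [PseudoMetricSpace X]

def oscSet (φ : ℝ → ℝ) (f : X → ℝ) (n : ℕ) (s : ℝ) : Set X :=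
  {x | ∀ r, 0 < r → r < s → ENNReal.ofReal (φ r) ≤ n * Metric.ediam (f '' closedBall x r)}

theorem oscSet_anti (φ : ℝ → ℝ) (f : X → ℝ) (n : ℕ) {s s' : ℝ} (hss' : s ≤ s') :
    oscSet φ f n s' ⊆ oscSet φ f n s :=
  fun _ hx r hr hrs => hx r hr (hrs.trans_le hss')

theorem exists_mem_oscSet_of_lipGauge_pos {φ : ℝ → ℝ} {f : X → ℝ} {x : X}
    (h : 0 < lipGauge φ f x) : ∃ n : ℕ, ∃ s > 0, x ∈ oscSet φ f n s := by
  obtain ⟨n, hn⟩ := ENNReal.exists_inv_nat_lt h.ne'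
  have hn0 : (n : ℝ≥0∞) ≠ 0 := by
    rintro h0
    simp [h0] at hn
  obtain ⟨s, hs, hsub⟩ := mem_nhdsGT_iff_exists_Ioo_subset.1 (eventually_lt_of_lt_liminf hn)
  refine ⟨n, s, hs, fun r hr hrs => ?_⟩
  have hlt : (n : ℝ≥0∞)⁻¹ < Metric.ediam (f '' closedBall x r) / ENNReal.ofReal (φ r) :=
    hsub ⟨hr, hrs⟩
  rcases eq_or_ne (ENNReal.ofReal (φ r)) 0 with h0 | h0
  · simp [h0]
  have := (ENNReal.lt_div_iff_mul_lt (Or.inl h0) (Or.inl ENNReal.ofReal_ne_top)).1 hlt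
  rw [mul_comm, ← div_eq_mul_inv] at this
  rw [mul_comm]
  exact (ENNReal.div_le_iff_le_mul (Or.inl hn0) (Or.inl (ENNReal.natCast_ne_top n))).1 this.le

theorem notMem_oscSet_of_forall_dist_le {φ : ℝ → ℝ} {f : X → ℝ} {x : X} {n : ℕ}
    {r s c η : ℝ} (hr : 0 < r) (hrs : r < s) (hη : n * (2 * η) < φ r)
    (hf : ∀ y ∈ closedBall x r, dist (f y) c ≤ η) : x ∉ oscSet φ f n s := by
  intro hx
  have hη0 : 0 ≤ η := dist_nonneg.trans (hf x (mem_closedBall_self hr.le))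
  have hdiam : Metric.ediam (f '' closedBall x r) ≤ ENNReal.ofReal (2 * η) := by
    refine Metric.ediam_le ?_
    rintro _ ⟨y, hy, rfl⟩ _ ⟨z, hz, rfl⟩
    rw [edist_dist]
    refine ENNReal.ofReal_le_ofReal ?_
    linarith [dist_triangle_right (f y) (f z) c, hf y hy, hf z hz]
  have := (hx r hr hrs).trans (mul_le_mul_right hdiam _)
  rw [← ENNReal.ofReal_natCast, ← ENNReal.ofReal_mul (Nat.cast_nonneg n),
    ENNReal.ofReal_le_ofReal_iff (by positivity)] at this
  linarith

theorem eventually_oscSet_inter_subset [LocallyCompactSpace X] {φ : ℝ → ℝ}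
    (hφ : ∀ r, 0 < r → 0 < φ r) {K T : Set X} (hK : IsCompact K) {g : C(X, ℝ)} {w s : ℝ}
    (hw : 0 < w) (hs : 0 < s) (hg : ∀ x ∈ K \ T, ∀ y ∈ closedBall x w, g y = g x)
    (n : ℕ) :
    ∀ᶠ h : C(X, ℝ) in 𝓝 g, oscSet φ h n s ∩ K ⊆ T := by
  obtain ⟨δ, hδ, hC⟩ := hK.exists_isCompact_cthickening
  set r := min (min w δ) (s / 2)
  have hr : 0 < r := lt_min (lt_min hw hδ) (by positivity)
  set η := φ r / (2 * (n + 1))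
  have hη : n * (2 * η) < φ r := by
    have hφr := hφ r hr
    have : (n : ℝ) * (2 * η) * (n + 1) = n * φ r := by simp only [η]; field_simp
    nlinarith
  filter_upwards [(ContinuousMap.hasBasis_nhds_dist g).mem_of_mem
    (i := (cthickening δ K, η)) ⟨hC, div_pos (hφ r hr) (by positivity)⟩]
    with h hh x ⟨hxA, hxK⟩
  by_contra hxT
  refine notMem_oscSet_of_forall_dist_le hr (by linarith [min_le_right (min w δ) (s / 2)]) hη
    (c := g x) (fun y hy => ?_) hxA
  have hyC : y ∈ cthickening δ K :=
    mem_cthickening_of_dist_le y x δ K hxK ((mem_closedBall.1 hy).trans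
      ((min_le_left _ _).trans (min_le_right _ _)))
  rw [← hg x ⟨hxK, hxT⟩ y (closedBall_subset_closedBall
    ((min_le_left _ _).trans (min_le_left _ _)) hy), dist_comm]
  exact (hh y hyC).le

end Oscillation

noncomputable section GridCollapse

def ramp (a w t : ℝ) : ℝ := max 0 (min (t - a) w)

theorem ramp_of_le {a w t : ℝ} (h : t ≤ a) : ramp a w t = 0 :=
  max_eq_left ((min_le_left _ _).trans (by linarith))

theorem ramp_of_ge {a w t : ℝ} (hw : 0 ≤ w) (h : a + w ≤ t) : ramp a w t = w := by
  rw [ramp, min_eq_right (by linarith), max_eq_right hw]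

theorem ramp_eq_ite {ρ w u : ℝ} (hρ : 0 ≤ ρ) (hw : 0 ≤ w) {j k : ℤ}
    (hu : u ∈ Icc (k * ρ) ((k + 1) * ρ - w)) :
    ramp (j * ρ - w) w u = if j ≤ k then w else 0 := by
  split_ifs with h
  · have : (j : ℝ) * ρ ≤ k * ρ := by gcongr
    exact ramp_of_ge hw (by linarith [hu.1])
  · have : ((k : ℝ) + 1) * ρ ≤ j * ρ := by gcongr; exact_mod_cast (not_le.1 h)
    exact ramp_of_le (by linarith [hu.2])

/-- `stair ρ w M` is nondecreasing, constant on each core `[kρ, (k + 1)ρ - w]`, and rises by `ρ`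
across each strip `[kρ - w, kρ]` with `|k| ≤ M`; hence it stays within `2ρ` of the identity on
`(-Mρ, Mρ)`. -/
def stair (ρ w : ℝ) (M : ℕ) (t : ℝ) : ℝ :=
  ρ / w * ∑ j ∈ Finset.Icc (-(M : ℤ)) M, ramp (j * ρ - w) w t - M * ρ

theorem continuous_stair (ρ w : ℝ) (M : ℕ) : Continuous (stair ρ w M) := by
  unfold stair ramp
  fun_prop

theorem monotone_stair {ρ w : ℝ} (hρ : 0 ≤ ρ) (hw : 0 ≤ w) (M : ℕ) :
    Monotone (stair ρ w M) := by
  intro s t hst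
  unfold stair ramp
  gcongr

theorem stair_eq_of_mem_core {ρ w : ℝ} (hρ : 0 ≤ ρ) (hw : 0 ≤ w) (M : ℕ) {k : ℤ}
    {t t' : ℝ} (ht : t ∈ Icc (k * ρ) ((k + 1) * ρ - w))
    (ht' : t' ∈ Icc (k * ρ) ((k + 1) * ρ - w)) :
    stair ρ w M t = stair ρ w M t' := by
  unfold stair
  congr 2
  exact Finset.sum_congr rfl fun j _ => (ramp_eq_ite hρ hw ht).trans (ramp_eq_ite hρ hw ht').symm

theorem stair_intCast_mul {ρ w : ℝ} (hw : 0 < w) (hwρ : w ≤ ρ) {M : ℕ} {k : ℤ}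
    (hk₁ : -(M : ℤ) - 1 ≤ k) (hk₂ : k ≤ M) : stair ρ w M (k * ρ) = (k + 1) * ρ := by
  have hcore : (k : ℝ) * ρ ∈ Icc (k * ρ) ((k + 1) * ρ - w) := ⟨le_rfl, by linarith⟩
  have hfilter : (Finset.Icc (-(M : ℤ)) M).filter (· ≤ k) = Finset.Icc (-(M : ℤ)) k := by
    ext j
    simp only [Finset.mem_filter, Finset.mem_Icc]
    omega
  have hcard : (((Finset.Icc (-(M : ℤ)) k).card : ℕ) : ℝ) = k + M + 1 := by
    rw [Int.card_Icc]
    have : ((k + 1 - -(M : ℤ)).toNat : ℤ) = k + M + 1 := by omega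
    exact_mod_cast this
  rw [stair, Finset.sum_congr rfl fun j _ => ramp_eq_ite (hw.le.trans hwρ) hw.le hcore,
    Finset.sum_ite, Finset.sum_const_zero, add_zero, Finset.sum_const, nsmul_eq_mul, hfilter,
    hcard]
  field_simp
  ring

theorem abs_stair_sub_le {ρ w : ℝ} (hρ : 0 < ρ) (hw : 0 < w) (hwρ : w ≤ ρ) {M : ℕ}
    {t : ℝ} (ht : |t| < M * ρ) : |stair ρ w M t - t| ≤ 2 * ρ := by
  set κ := ⌊t / ρ⌋
  have h₁ : κ * ρ ≤ t := (le_div_iff₀ hρ).1 (Int.floor_le _)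
  have h₂ : t < (κ + 1) * ρ := (div_lt_iff₀ hρ).1 (Int.lt_floor_add_one _)
  obtain ⟨htM₁, htM₂⟩ := abs_lt.1 ht
  have hκ₁ : -(M : ℤ) - 1 ≤ κ := by
    have : -(M : ℝ) < κ + 1 := lt_of_mul_lt_mul_right (by linarith) hρ.le
    have : -(M : ℤ) < κ + 1 := by exact_mod_cast this
    omega
  have hκ₂ : κ + 1 ≤ M := by
    have : (κ : ℝ) < M := lt_of_mul_lt_mul_right (by linarith) hρ.le
    have : κ < M := by exact_mod_cast this
    omega
  have hlo := monotone_stair hρ.le hw.le M h₁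
  have hhi := monotone_stair hρ.le hw.le M h₂.le
  rw [stair_intCast_mul hw hwρ hκ₁ (by omega)] at hlo
  rw [show ((κ : ℝ) + 1) * ρ = ((κ + 1 : ℤ) : ℝ) * ρ by push_cast; ring,
    stair_intCast_mul hw hwρ (by omega) hκ₂] at hhi
  push_cast at hhi
  rw [abs_le]
  constructor <;> linarith

theorem stair_eq_of_abs_sub_le {ρ w : ℝ} (hρ : 0 < ρ) (hw : 0 ≤ w) (M : ℕ) {t t' : ℝ}
    (ht : ∀ k : ℤ, t ∉ Icc (k * ρ - 2 * w) (k * ρ + w)) (htt' : |t' - t| ≤ w) :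
    stair ρ w M t' = stair ρ w M t := by
  set κ := ⌊t / ρ⌋
  have h₁ : κ * ρ ≤ t := (le_div_iff₀ hρ).1 (Int.floor_le _)
  have h₂ : t < (κ + 1) * ρ := (div_lt_iff₀ hρ).1 (Int.lt_floor_add_one _)
  have h₃ : κ * ρ + w < t := by
    by_contra h
    exact ht κ ⟨by linarith, by linarith⟩
  have h₄ : t < (κ + 1) * ρ - 2 * w := by
    by_contra h
    exact ht (κ + 1) ⟨by push_cast; linarith, by push_cast; linarith⟩
  obtain ⟨h₅, h₆⟩ := abs_le.1 htt'
  exact stair_eq_of_mem_core hρ.le hw M ⟨by linarith, by linarith⟩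
    ⟨by linarith, by linarith⟩

end GridCollapse

noncomputable section CoordinateCollapse

variable {d : ℕ}

def stairMap (ρ w : ℝ) (M : ℕ) (x : EuclideanSpace ℝ (Fin d)) : EuclideanSpace ℝ (Fin d) :=
  WithLp.toLp 2 fun j => stair ρ w M (x j)

theorem continuous_stairMap (ρ w : ℝ) (M : ℕ) : Continuous (stairMap (d := d) ρ w M) := by
  have := continuous_stair ρ w M
  unfold stairMap
  fun_prop

theorem dist_stairMap_le {ρ w : ℝ} (hρ : 0 < ρ) (hw : 0 < w) (hwρ : w ≤ ρ) {M : ℕ}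
    {x : EuclideanSpace ℝ (Fin d)} (hx : ∀ j, |x j| < M * ρ) :
    dist (stairMap ρ w M x) x ≤ 2 * ρ * √d := by
  rw [EuclideanSpace.dist_eq]
  calc √(∑ j, dist (stairMap ρ w M x j) (x j) ^ 2) ≤ √(∑ _j : Fin d, (2 * ρ) ^ 2) := by
        gcongr with j
        rw [Real.dist_eq]
        exact abs_stair_sub_le hρ hw hwρ (hx j)
    _ = 2 * ρ * √d := by
        rw [Finset.sum_const, Finset.card_univ, Fintype.card_fin, nsmul_eq_mul,
          Real.sqrt_mul (Nat.cast_nonneg d), Real.sqrt_sq (by positivity), mul_comm]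

theorem stairMap_eq_of_dist_le {ρ w : ℝ} (hρ : 0 < ρ) (hw : 0 ≤ w) (M : ℕ)
    {x y : EuclideanSpace ℝ (Fin d)}
    (hx : ∀ j (k : ℤ), x j ∉ Icc (k * ρ - 2 * w) (k * ρ + w))
    (hy : dist y x ≤ w) : stairMap ρ w M y = stairMap ρ w M x := by
  unfold stairMap
  congr 1
  funext j
  refine stair_eq_of_abs_sub_le hρ hw M (hx j) ?_
  rw [← Real.dist_eq]
  exact (PiLp.dist_apply_le y x j).trans hy

def slab (R ρ w : ℝ) (j : Fin d) (k : ℤ) : Set (EuclideanSpace ℝ (Fin d)) :=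
  box (update (fun _ => -R) j (k * ρ - 2 * w)) (update (fun _ => R) j (k * ρ + w))

theorem volume_slab (R ρ w : ℝ) (j : Fin d) (k : ℤ) :
    volume (slab R ρ w j k) = ENNReal.ofReal (3 * w) * ENNReal.ofReal (2 * R) ^ (d - 1) := by
  have hside : ∀ i, ENNReal.ofReal (update (fun _ => R) j (k * ρ + w) i -
      update (fun _ => -R) j (k * ρ - 2 * w) i) =
      update (fun _ => ENNReal.ofReal (2 * R)) j (ENNReal.ofReal (3 * w)) i := by
    intro i
    rcases eq_or_ne i j with rfl | hij
    · simp only [update_self]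
      ring_nf
    · simp only [update_of_ne hij]
      ring_nf
  rw [slab, volume_box, Finset.prod_congr rfl fun i _ => hside i,
    Finset.prod_update_of_mem (Finset.mem_univ j), Finset.prod_const,
    Finset.sdiff_singleton_eq_erase, Finset.card_erase_of_mem (Finset.mem_univ j),
    Finset.card_univ, Fintype.card_fin]

theorem mem_slab {R ρ w : ℝ} {x : EuclideanSpace ℝ (Fin d)} (hx : ∀ i, |x i| ≤ R)
    {j : Fin d} {k : ℤ} (hxj : x j ∈ Icc (k * ρ - 2 * w) (k * ρ + w)) :
    x ∈ slab R ρ w j k := by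
  intro i
  rcases eq_or_ne i j with rfl | hij
  · simpa using hxj
  · simpa [hij, abs_le] using hx i

theorem mem_Icc_of_mem_strip {R ρ w t : ℝ} (hρ : 0 < ρ) (hwρ : 2 * w ≤ ρ) {M : ℕ}
    (hM : R + ρ ≤ M * ρ) (ht : |t| ≤ R) {k : ℤ}
    (hk : t ∈ Icc (k * ρ - 2 * w) (k * ρ + w)) :
    k ∈ Finset.Icc (-(M : ℤ)) M := by
  obtain ⟨ht₁, ht₂⟩ := abs_le.1 ht
  have h₁ : (-(M : ℝ)) ≤ k := le_of_mul_le_mul_right (by linarith [hk.2]) hρ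
  have h₂ : (k : ℝ) ≤ M := le_of_mul_le_mul_right (by linarith [hk.1]) hρ
  exact Finset.mem_Icc.2 ⟨by exact_mod_cast h₁, by exact_mod_cast h₂⟩

theorem exists_forall_dist_comp_stairMap_lt {F : EuclideanSpace ℝ (Fin d) → ℝ}
    (hF : Continuous F) (R : ℝ) {η : ℝ} (hη : 0 < η) :
    ∃ ρ > 0, ∀ w, 0 < w → w ≤ ρ → ∀ M : ℕ, R < M * ρ → ∀ x, ‖x‖ ≤ R →
      dist (F x) (F (stairMap ρ w M x)) < η := by
  obtain ⟨δ, hδ, hFδ⟩ := Metric.uniformContinuousOn_iff.1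
    ((isCompact_closedBall 0 (R + 1)).uniformContinuousOn_of_continuous hF.continuousOn) η hη
  set ρ := min δ 1 / (2 * √d + 1)
  have hρ : 0 < ρ := by positivity
  have hρδ : 2 * ρ * √d < min δ 1 := by
    have : min δ 1 = (2 * √d + 1) * ρ := by simp only [ρ]; field_simp
    linarith
  refine ⟨ρ, hρ, fun w hw hwρ M hM x hx => ?_⟩
  have hdist : dist (stairMap ρ w M x) x < min δ 1 :=
    (dist_stairMap_le hρ hw hwρ fun j =>
      ((PiLp.norm_apply_le x j).trans hx).trans_lt hM).trans_lt hρδ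
  obtain ⟨hdδ, hd1⟩ := lt_min_iff.1 hdist
  refine hFδ x (mem_closedBall_zero_iff.2 (by linarith)) _ ?_ (by rwa [dist_comm])
  rw [mem_closedBall_zero_iff, ← dist_zero_right]
  linarith [dist_triangle (stairMap ρ w M x) x 0, dist_zero_right x]

end CoordinateCollapse

theorem exists_continuous_near_const_off_microscopicAt {d : ℕ} (hd : 0 < d)
    {F : EuclideanSpace ℝ (Fin d) → ℝ} (hF : Continuous F) {R η ε : ℝ} (hR : 0 ≤ R)
    (hη : 0 < η) (hε0 : 0 < ε) (hε1 : ε ≤ 1) :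
    ∃ ψ : EuclideanSpace ℝ (Fin d) → EuclideanSpace ℝ (Fin d), Continuous ψ ∧
      ∃ w > 0, ∃ U, MicroscopicAt ε U ∧
        (∀ x, ‖x‖ ≤ R → dist (F x) (F (ψ x)) < η) ∧
        ∀ x, ‖x‖ ≤ R → x ∉ U → ∀ y, dist y x ≤ w → ψ y = ψ x := by
  obtain ⟨ρ, hρ, hstair⟩ := exists_forall_dist_comp_stairMap_lt hF R hη
  set M := ⌈R / ρ⌉₊ + 1
  have hM : R + ρ ≤ M * ρ := by
    have := (div_le_iff₀ hρ).1 (Nat.le_ceil (R / ρ))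
    push_cast [M]
    linarith
  set ι := Fin d × Finset.Icc (-(M : ℤ)) M
  set P := (2 * R) ^ (d - 1)
  set w := min (ρ / 2) (ε ^ Nat.card ι / (3 * P + 1))
  have hw : 0 < w := lt_min (by positivity) (by positivity)
  have hwρ : 2 * w ≤ ρ := by linarith [min_le_left (ρ / 2) (ε ^ Nat.card ι / (3 * P + 1))]
  have hwvol : 3 * w * P ≤ ε ^ Nat.card ι := by
    have : w * (3 * P + 1) ≤ ε ^ Nat.card ι :=
      (le_div_iff₀ (by positivity)).1 (min_le_right _ _)
    nlinarith [hw, show 0 ≤ P by positivity]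
  refine ⟨stairMap ρ w M, continuous_stairMap ρ w M, w, hw, ⋃ i : ι, slab R ρ w i.1 i.2,
    microscopicAt_iUnion_of_finite hd hε0.le hε1 (fun _ => isBox_box _ _) fun _ => ?_,
    fun x hx => hstair w hw (by linarith) M (by linarith) x hx, fun x hx hxU y hy => ?_⟩
  · rw [volume_slab, ← ENNReal.ofReal_pow (by positivity),
      ← ENNReal.ofReal_mul (by positivity)]
    exact ENNReal.ofReal_le_ofReal hwvol
  have hxR : ∀ j, |x j| ≤ R := fun j => (PiLp.norm_apply_le x j).trans hx
  refine stairMap_eq_of_dist_le hρ hw.le M (fun j k hk => hxU ?_) hy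
  exact mem_iUnion.2
    ⟨(j, ⟨k, mem_Icc_of_mem_strip hρ hwρ hM (hxR j) hk⟩), mem_slab hxR hk⟩

theorem dense_interior_microscopicAt_oscSet {d : ℕ} (hd : 0 < d) {φ : ℝ → ℝ}
    (hφ : ∀ r, 0 < r → 0 < φ r) {Ω : Set (EuclideanSpace ℝ (Fin d))}
    [LocallyCompactSpace Ω] {K : Set Ω} (hK : IsCompact K) (n : ℕ) {s : ℝ} (hs : 0 < s)
    {ε : ℝ} (hε0 : 0 < ε) (hε1 : ε ≤ 1) :
    Dense (interior
      {f : C(Ω, ℝ) | MicroscopicAt ε (Subtype.val '' (oscSet φ f n s ∩ K))}) := by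
  intro f
  refine (mem_closure_iff_nhds_basis' (ContinuousMap.hasBasis_nhds_dist f)).2 ?_
  rintro ⟨L, η⟩ ⟨hL, hη⟩
  obtain ⟨R, hR0, hR⟩ :=
    ((hK.union hL).image continuous_subtype_val).isBounded.exists_pos_norm_le
  have := isCompact_iff_compactSpace.1 hL
  obtain ⟨F, hF⟩ := (f.restrict L).exists_extension'
    ((continuous_subtype_val.comp continuous_subtype_val).isClosedEmbedding
      (Subtype.val_injective.comp Subtype.val_injective))
  obtain ⟨ψ, hψ, w, hw, U, hU, hnear, hconst⟩ :=
    exists_continuous_near_const_off_microscopicAt hd F.continuous hR0.le hη hε0 hε1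
  let g : C(Ω, ℝ) := ⟨fun x => F (ψ x), F.continuous.comp (hψ.comp continuous_subtype_val)⟩
  refine ⟨g, fun x hx => ?_, ?_⟩
  · have hFx : F x = f x := congrFun hF ⟨x, hx⟩
    rw [← hFx]
    exact hnear x (hR _ ⟨x, Or.inr hx, rfl⟩)
  have hgconst : ∀ x ∈ K \ Subtype.val ⁻¹' U, ∀ y ∈ closedBall x w, g y = g x :=
    fun x hx y hy => congrArg F (hconst x (hR _ ⟨x, Or.inl hx.1, rfl⟩) hx.2 y hy)
  rw [mem_interior_iff_mem_nhds]
  filter_upwards [eventually_oscSet_inter_subset hφ hK hw hs hgconst n] with h hh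
  exact hU.mono (image_subset_iff.2 hh)

theorem stmt18
    (d : ℕ) (hd : 0 < d) (Ω : Set (EuclideanSpace ℝ (Fin d)))
    (hΩ : LocallyCompactSpace Ω) (φ : ℝ → ℝ) (hφ : IsGauge φ) :
    ∀ᶠ f : C(↥Ω, ℝ) in residual C(↥Ω, ℝ),
      Microscopic {x : EuclideanSpace ℝ (Fin d) | ∃ hx : x ∈ Ω, 0 < lipGauge φ (⇑f) ⟨x, hx⟩} := by
  set K := compactCovering Ω
  have hgeneric : ∀ i : ℕ × ℕ × ℕ × ℕ, ∀ᶠ f : C(Ω, ℝ) in residual C(Ω, ℝ),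
      f ∈ interior {f : C(Ω, ℝ) | MicroscopicAt (1 / (i.2.2.2 + 1))
        (Subtype.val '' (oscSet φ f i.2.1 (1 / (i.2.2.1 + 1)) ∩ K i.1))} :=
    fun ⟨p, n, m, q⟩ => residual_of_dense_open isOpen_interior
      (dense_interior_microscopicAt_oscSet hd hφ.2.2.2 (isCompact_compactCovering Ω p) n
        (by positivity) (by positivity) (div_le_one_of_le₀ (by simp) (by positivity)))
  filter_upwards [eventually_countable_forall.2 hgeneric] with f hf
  have hcover : ∀ p n m q : ℕ, MicroscopicAt (1 / (q + 1))
      (Subtype.val '' (oscSet φ f n (1 / (m + 1)) ∩ K p)) :=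
    fun p n m q => (interior_subset (hf (p, n, m, q)) :)
  refine Microscopic.mono (Microscopic.iUnion fun p => Microscopic.iUnion fun n =>
    Microscopic.iUnion fun m => microscopic_of_forall_microscopicAt_one_div (hcover p n m)) ?_
  rintro x ⟨hx, hlip⟩
  obtain ⟨n, s, hs, hxs⟩ := exists_mem_oscSet_of_lipGauge_pos hlip
  obtain ⟨m, hm⟩ := exists_nat_one_div_lt hs
  obtain ⟨p, hp⟩ := exists_mem_compactCovering (⟨x, hx⟩ : Ω)
  exact mem_iUnion.2 ⟨p, mem_iUnion.2 ⟨n, mem_iUnion.2 ⟨m,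
    ⟨x, hx⟩, ⟨oscSet_anti φ f n hm.le hxs, hp⟩, rfl⟩⟩⟩
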